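/- arXiv:1207.3480 — 3 statements merged into one kernel-verified Lean document; each statement's English description precedes it below -/
import Mathlib

section
/- Let d > 2 and let d̃ be the largest even integer with d̃ ≤ d. Then the proportion in S_d of permutations having exactly one 2-cycle and all other cycles of odd length equals [(d̃-3)!!]² / (2·(d̃-2)!), and this quantity is strictly greater than 1/(4√d). -/
/-!
Every permutation of `Fin (n + 1)` arises exactly once from a permutation `e` of `Fin n`, either by
adding `0` as a fixed point or by inserting `0` into the cycle of some `q` just in front of `q`;
insertion lengthens that cycle by one and leaves all other cycles alone. Tracking the length of the
cycle through `0` together with the even part of the cycle type of the other cycles gives, for the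
number `a n` of permutations of `Fin n` with only odd cycles,
`a (n + 2) = a (n + 1) + (n + 1) n a n`, hence `a (2m) = ((2m-1)!!)²` and
`a (2m+1) = (2m+1) a (2m)`; for the number `b n` of those whose only even cycle is a transposition
it gives `2 b (n + 2) = (n + 2) (n + 1) a n`. So the proportion is `a (d-2) / (2 (d-2)!)`, which
equals `((d̃-3)!!)² / (2 (d̃-2)!) = (d̃-3)!! / (2 (d̃-2)!!)`, and the bound follows from the
Wallis-type estimate `((2j)!!)² ≤ (4j+1) ((2j-1)!!)²`.
-/

open Equiv Finset

namespace Equiv.Perm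

variable {α : Type*} [DecidableEq α] [Fintype α]

/-- Unlike `#(σ.cycleOf x).support`, this is `1`, not `0`, at a fixed point, so inserting a point
into a cycle always adds one. -/
def cycleLength (σ : Perm α) (x : α) : ℕ := #{y | σ.SameCycle x y}

theorem cycleLength_eq_card_insert (σ : Perm α) (x : α) :
    σ.cycleLength x = #(insert x (σ.cycleOf x).support) := by
  unfold cycleLength
  congr 1
  ext y
  rw [mem_filter, mem_insert, mem_support_cycleOf_iff]
  by_cases hy : y = x
  · simp [hy, SameCycle.refl]
  · have : σ.SameCycle x y → x ∈ σ.support := fun h =>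
      mem_support.2 fun hx => hy (h.eq_of_left hx).symm
    simp only [mem_univ, true_and, hy, false_or]
    tauto

theorem cycleLength_pos (σ : Perm α) (x : α) : 0 < σ.cycleLength x :=
  card_pos.2 ⟨x, by simp [SameCycle.refl]⟩

theorem cycleLength_of_apply_eq {σ : Perm α} {x : α} (hx : σ x = x) : σ.cycleLength x = 1 := by
  simp [cycleLength_eq_card_insert, (cycleOf_eq_one_iff σ).2 hx]

theorem cycleType_eq_cycleLength_cons {σ : Perm α} {x : α} (hx : σ x ≠ x) :
    σ.cycleType = σ.cycleLength x ::ₘ (σ * (σ.cycleOf x)⁻¹).cycleType := by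
  have hmem : σ.cycleOf x ∈ σ.cycleFactorsFinset :=
    cycleOf_mem_cycleFactorsFinset_iff.2 (mem_support.2 hx)
  have hlen : #(σ.cycleOf x).support = σ.cycleLength x := by
    rw [cycleLength_eq_card_insert,
      insert_eq_of_mem (mem_support_cycleOf_iff.2 ⟨.refl _ _, mem_support.2 hx⟩)]
  have hle := cycleType_le_of_mem_cycleFactorsFinset hmem
  rw [(isCycle_cycleOf σ hx).cycleType, hlen] at hle
  rw [cycleType_mul_inv_mem_cycleFactorsFinset_eq_sub hmem, (isCycle_cycleOf σ hx).cycleType,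
    hlen, ← Multiset.singleton_add, add_tsub_cancel_of_le hle]

theorem filter_even_cycleType (σ : Perm α) (x : α) :
    σ.cycleType.filter Even = (if Even (σ.cycleLength x) then {σ.cycleLength x} else 0) +
      (σ * (σ.cycleOf x)⁻¹).cycleType.filter Even := by
  by_cases hx : σ x = x
  · simp [cycleLength_of_apply_eq hx, (cycleOf_eq_one_iff σ).2 hx]
  · rw [cycleType_eq_cycleLength_cons hx, Multiset.filter_cons]

theorem cycleOf_conj (π σ : Perm α) (x : α) :
    (π * σ * π⁻¹).cycleOf (π x) = π * σ.cycleOf x * π⁻¹ := by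
  ext y
  have hsc : (π * σ * π⁻¹).SameCycle (π x) y ↔ σ.SameCycle x (π⁻¹ y) := by
    simp [sameCycle_conj]
  simp only [coe_mul, Function.comp_apply, cycleOf_apply, hsc]
  split_ifs <;> simp

theorem cycleLength_conj (π σ : Perm α) (x : α) :
    (π * σ * π⁻¹).cycleLength (π x) = σ.cycleLength x := by
  rw [cycleLength_eq_card_insert, cycleLength_eq_card_insert, cycleOf_conj, support_conj,
    show π x = π.toEmbedding x from rfl, ← map_insert, card_map]

theorem mul_inv_cycleOf_conj (π σ : Perm α) (x : α) :
    π * σ * π⁻¹ * ((π * σ * π⁻¹).cycleOf (π x))⁻¹ =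
      π * (σ * (σ.cycleOf x)⁻¹) * π⁻¹ := by
  rw [cycleOf_conj]; group

section ExtendDomain

variable {β : Type*} [DecidableEq β] [Fintype β] {p : β → Prop} [DecidablePred p]

theorem cycleOf_extendDomain (f : α ≃ Subtype p) (g : Perm α) (a : α) :
    (g.extendDomain f).cycleOf (f a) = (g.cycleOf a).extendDomain f := by
  ext b
  by_cases hb : p b
  · obtain ⟨c, rfl⟩ : ∃ c, (f c : β) = b := ⟨f.symm ⟨b, hb⟩, by simp⟩
    simp only [cycleOf_apply, sameCycle_extendDomain, extendDomain_apply_image]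
    split_ifs <;> simp
  · rw [cycleOf_apply, extendDomain_apply_not_subtype _ _ hb]
    split_ifs <;> rw [extendDomain_apply_not_subtype _ _ hb]

theorem cycleLength_extendDomain (f : α ≃ Subtype p) (g : Perm α) (a : α) :
    (g.extendDomain f).cycleLength (f a) = g.cycleLength a := by
  rw [cycleLength_eq_card_insert, cycleLength_eq_card_insert, cycleOf_extendDomain,
    support_extend_domain, show ((f a : Subtype p) : β) = f.asEmbedding a from rfl,
    ← map_insert, card_map]

theorem mul_inv_cycleOf_extendDomain (f : α ≃ Subtype p) (g : Perm α) (a : α) :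
    g.extendDomain f * ((g.extendDomain f).cycleOf (f a))⁻¹ =
      (g * (g.cycleOf a)⁻¹).extendDomain f := by
  rw [cycleOf_extendDomain, extendDomain_inv, extendDomain_mul]

end ExtendDomain

section Insertion

theorem mul_inv_cycleOf_apply_of_sameCycle {f : Perm α} {y z : α} (h : f.SameCycle y z) :
    (f * (f.cycleOf y)⁻¹) z = z := by
  rw [mul_apply, cycleOf_inv, cycleOf_apply, if_pos (sameCycle_inv.2 h)]
  simp

theorem mul_inv_cycleOf_apply_of_apply_eq {f : Perm α} {y z : α} (h : f z = z) :
    (f * (f.cycleOf y)⁻¹) z = z := by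
  have : f⁻¹ z = z := inv_eq_iff_eq.2 h.symm
  rw [mul_apply, cycleOf_inv, cycleOf_apply]
  split_ifs <;> simp [this, h]

theorem disjoint_mul_inv_cycleOf (f : Perm α) (y : α) :
    Disjoint (f * (f.cycleOf y)⁻¹) (f.cycleOf y) := by
  by_cases hy : f y = y
  · simp [(cycleOf_eq_one_iff f).2 hy]
  · exact disjoint_mul_inv_of_mem_cycleFactorsFinset
      (cycleOf_mem_cycleFactorsFinset_iff.2 (mem_support.2 hy))

/-- Unlike `f.toList y`, which is `[]` at a fixed point, this is `[y]` there. -/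
def cycleList (f : Perm α) (y : α) : List α := y :: (f.toList y).tail

theorem toList_eq_cycleList {f : Perm α} {y : α} (hy : f y ≠ y) :
    f.toList y = f.cycleList y := by
  have hpos := length_toList_pos_of_mem_support f y (mem_support.2 hy)
  conv_lhs => rw [← List.cons_head_tail (List.ne_nil_of_length_pos hpos)]
  rw [List.head_eq_getElem, toList_getElem_zero f y (mem_support.2 hy), cycleList]

theorem formPerm_cycleList (f : Perm α) (y : α) :
    (f.cycleList y).formPerm = f.cycleOf y := by
  by_cases hy : f y = y
  · simp [cycleList, toList_eq_nil_iff.2 (notMem_support.2 hy), (cycleOf_eq_one_iff f).2 hy]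
  · rw [← toList_eq_cycleList hy, formPerm_toList]

theorem nodup_cycleList (f : Perm α) (y : α) : (f.cycleList y).Nodup := by
  by_cases hy : f y = y
  · simp [cycleList, toList_eq_nil_iff.2 (notMem_support.2 hy)]
  · rw [← toList_eq_cycleList hy]; exact nodup_toList f y

theorem mem_cycleList {f : Perm α} {y z : α} : z ∈ f.cycleList y ↔ f.SameCycle y z := by
  by_cases hy : f y = y
  · simp only [cycleList, toList_eq_nil_iff.2 (notMem_support.2 hy), List.tail_nil,
      List.mem_singleton]
    exact ⟨fun h => h ▸ .refl _ _, fun h => (h.eq_of_left hy).symm⟩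
  · rw [← toList_eq_cycleList hy, mem_toList_iff]
    exact ⟨And.left, fun h => ⟨h, mem_support.2 hy⟩⟩

theorem cycleLength_eq_length_cycleList (f : Perm α) (y : α) :
    f.cycleLength y = (f.cycleList y).length := by
  rw [← List.toFinset_card_of_nodup (nodup_cycleList f y), cycleLength]
  congr 1
  ext z
  simp [mem_cycleList]

variable {f : Perm α} {x y : α}

theorem nodup_cons_cycleList (hx : f x = x) (hxy : x ≠ y) : (x :: f.cycleList y).Nodup :=
  List.nodup_cons.2
    ⟨fun h => hxy (mem_cycleList.1 h |>.eq_of_right hx).symm, nodup_cycleList f y⟩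

theorem swap_mul_eq_formPerm_mul (hx : f x = x) (hxy : x ≠ y) :
    swap x y * f = (x :: f.cycleList y).formPerm * (f * (f.cycleOf y)⁻¹) ∧
      Disjoint (x :: f.cycleList y).formPerm (f * (f.cycleOf y)⁻¹) := by
  refine ⟨?_, fun z => ?_⟩
  · rw [cycleList, List.formPerm_cons_cons, ← cycleList, formPerm_cycleList, mul_assoc,
      ← (disjoint_mul_inv_cycleOf f y).commute.eq, inv_mul_cancel_right]
  · by_cases hz : z ∈ x :: f.cycleList y
    · right
      rcases List.mem_cons.1 hz with rfl | hz
      · exact mul_inv_cycleOf_apply_of_apply_eq hx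
      · exact mul_inv_cycleOf_apply_of_sameCycle (mem_cycleList.1 hz)
    · exact Or.inl (List.formPerm_apply_of_notMem hz)

theorem cycleOf_swap_mul (hx : f x = x) (hxy : x ≠ y) :
    (swap x y * f).cycleOf x = (x :: f.cycleList y).formPerm := by
  obtain ⟨heq, hdisj⟩ := swap_mul_eq_formPerm_mul hx hxy
  have hcyc : (x :: f.cycleList y).formPerm.IsCycle :=
    List.isCycle_formPerm (nodup_cons_cycleList hx hxy) (by simp [cycleList])
  have hmoved : (x :: f.cycleList y).formPerm x ≠ x := by
    rw [cycleList, List.formPerm_apply_head _ _ _ (nodup_cons_cycleList hx hxy)]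
    exact hxy.symm
  rw [heq, hdisj.cycleOf_mul_distrib, hcyc.cycleOf_eq hmoved,
    (cycleOf_eq_one_iff _).2 (mul_inv_cycleOf_apply_of_apply_eq hx), mul_one]

theorem cycleLength_swap_mul (hx : f x = x) (hxy : x ≠ y) :
    (swap x y * f).cycleLength x = f.cycleLength y + 1 := by
  have hnd := nodup_cons_cycleList hx hxy
  rw [cycleLength_eq_card_insert, cycleOf_swap_mul hx hxy,
    List.support_formPerm_of_nodup _ hnd (by simp [cycleList]), ← List.toFinset_cons,
    List.toFinset_cons, insert_eq_of_mem (by simp), List.toFinset_card_of_nodup hnd,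
    List.length_cons, cycleLength_eq_length_cycleList]

theorem mul_inv_cycleOf_swap_mul (hx : f x = x) (hxy : x ≠ y) :
    swap x y * f * ((swap x y * f).cycleOf x)⁻¹ = f * (f.cycleOf y)⁻¹ := by
  obtain ⟨heq, hdisj⟩ := swap_mul_eq_formPerm_mul hx hxy
  rw [cycleOf_swap_mul hx hxy, heq, hdisj.commute.eq, mul_inv_cancel_right]

end Insertion

theorem card_cycleLength_conj_eq (Q : ℕ → Multiset ℕ → Prop) (π : Perm α) (x : α) :
    Nat.card {σ : Perm α // Q (σ.cycleLength x) (σ * (σ.cycleOf x)⁻¹).cycleType} =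
      Nat.card {σ : Perm α //
        Q (σ.cycleLength (π x)) (σ * (σ.cycleOf (π x))⁻¹).cycleType} :=
  Nat.card_congr <| (MulAut.conj π).toEquiv.subtypeEquiv fun σ => by
    show _ ↔ Q ((π * σ * π⁻¹).cycleLength (π x))
      (π * σ * π⁻¹ * ((π * σ * π⁻¹).cycleOf (π x))⁻¹).cycleType
    rw [cycleLength_conj, mul_inv_cycleOf_conj, cycleType_conj]

theorem coe_finSuccAboveEquiv_zero {n : ℕ} (q : Fin n) :
    (finSuccAboveEquiv (0 : Fin (n + 1)) q : Fin (n + 1)) = q.succ := by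
  simp [finSuccAboveEquiv_apply]

theorem decomposeFin_symm_eq {n : ℕ} (p : Fin (n + 1)) (e : Perm (Fin n)) :
    decomposeFin.symm (p, e) = swap 0 p * e.extendDomain (finSuccAboveEquiv 0) := by
  ext x
  refine Fin.cases ?_ (fun q => ?_) x
  · simp [extendDomain_apply_not_subtype]
  · rw [decomposeFin_symm_apply_succ, mul_apply, ← coe_finSuccAboveEquiv_zero q,
      extendDomain_apply_image, coe_finSuccAboveEquiv_zero]

theorem card_perm_fin_succ {n : ℕ} (P : Perm (Fin (n + 1)) → Prop) :
    Nat.card {σ // P σ} = ∑ p, Nat.card {e : Perm (Fin n) // P (decomposeFin.symm (p, e))} := by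
  rw [← Nat.card_congr (decomposeFin.symm.subtypeEquiv fun _ => Iff.rfl),
    Nat.card_congr (subtypeProdEquivSigmaSubtype fun p e => P (decomposeFin.symm (p, e))),
    Nat.card_sigma]

end Equiv.Perm

open Equiv.Perm

open scoped Nat

noncomputable def permCount (n : ℕ) (P : Multiset ℕ → Prop) : ℕ :=
  Nat.card {σ : Perm (Fin n) // P σ.cycleType}

/-- `σ * (σ.cycleOf 0)⁻¹` is `σ` with the cycle through `0` removed. -/
noncomputable def cycleCount (n : ℕ) (Q : ℕ → Multiset ℕ → Prop) : ℕ :=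
  Nat.card {σ : Perm (Fin (n + 1)) // Q (σ.cycleLength 0) (σ * (σ.cycleOf 0)⁻¹).cycleType}

theorem cycleCount_eq_add_sum (n : ℕ) (Q : ℕ → Multiset ℕ → Prop) :
    cycleCount n Q = permCount n (Q 1) + ∑ q : Fin n,
      Nat.card {e : Perm (Fin n) //
        Q (e.cycleLength q + 1) (e * (e.cycleOf q)⁻¹).cycleType} := by
  set ι := finSuccAboveEquiv (0 : Fin (n + 1))
  have hfix (e : Perm (Fin n)) : e.extendDomain ι 0 = 0 :=
    extendDomain_apply_not_subtype _ _ (not_not.2 rfl)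
  rw [cycleCount, card_perm_fin_succ, Fin.sum_univ_succ]
  congr 1
  · refine Nat.card_congr (Equiv.subtypeEquivRight fun e => ?_)
    rw [decomposeFin_symm_eq, swap_self, ← Perm.one_def, one_mul,
      cycleLength_of_apply_eq (hfix e), (cycleOf_eq_one_iff _).2 (hfix e), inv_one, mul_one,
      cycleType_extendDomain]
  · refine Finset.sum_congr rfl fun q _ => Nat.card_congr (Equiv.subtypeEquivRight fun e => ?_)
    have hne : (0 : Fin (n + 1)) ≠ ι q := by
      rw [coe_finSuccAboveEquiv_zero]; exact (Fin.succ_ne_zero q).symm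
    rw [decomposeFin_symm_eq, ← coe_finSuccAboveEquiv_zero q, cycleLength_swap_mul (hfix e) hne,
      mul_inv_cycleOf_swap_mul (hfix e) hne, cycleLength_extendDomain,
      mul_inv_cycleOf_extendDomain, cycleType_extendDomain]

theorem cycleCount_zero (Q : ℕ → Multiset ℕ → Prop) :
    cycleCount 0 Q = permCount 0 (Q 1) := by
  simp [cycleCount_eq_add_sum]

theorem cycleCount_succ (n : ℕ) (Q : ℕ → Multiset ℕ → Prop) :
    cycleCount (n + 1) Q =
      permCount (n + 1) (Q 1) + (n + 1) * cycleCount n (fun ℓ => Q (ℓ + 1)) := by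
  rw [cycleCount_eq_add_sum, cycleCount,
    Finset.sum_congr rfl fun q _ => by
      simpa using card_cycleLength_conj_eq (fun ℓ => Q (ℓ + 1)) (swap q 0) q]
  simp

theorem permCount_false (n : ℕ) : permCount n (fun _ => False) = 0 := by
  simp [permCount]

theorem cycleCount_or (n : ℕ) {Q₁ Q₂ : ℕ → Multiset ℕ → Prop}
    (h : ∀ ℓ t, ¬(Q₁ ℓ t ∧ Q₂ ℓ t)) :
    cycleCount n (fun ℓ t => Q₁ ℓ t ∨ Q₂ ℓ t) =
      cycleCount n Q₁ + cycleCount n Q₂ := by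
  classical
  simp only [cycleCount, Nat.card_eq_fintype_card]
  exact Fintype.card_subtype_or_disjoint _ _
    fun _ h₁ h₂ σ hσ => h _ _ ⟨h₁ σ hσ, h₂ σ hσ⟩

section Parity

variable (X : Multiset ℕ → Prop)

theorem cycleCount_odd_succ (n : ℕ) :
    cycleCount (n + 1) (fun ℓ t => Odd ℓ ∧ X t) =
      permCount (n + 1) X + (n + 1) * cycleCount n (fun ℓ t => Even ℓ ∧ X t) := by
  simp [cycleCount_succ, Nat.odd_add_one]

theorem cycleCount_even_succ (n : ℕ) :
    cycleCount (n + 1) (fun ℓ t => Even ℓ ∧ X t) =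
      (n + 1) * cycleCount n (fun ℓ t => Odd ℓ ∧ X t) := by
  simp [cycleCount_succ, Nat.even_add_one, permCount_false]

theorem cycleCount_even_zero : cycleCount 0 (fun ℓ t => Even ℓ ∧ X t) = 0 := by
  simp [cycleCount_zero, permCount_false]

theorem cycleCount_odd_zero : cycleCount 0 (fun ℓ t => Odd ℓ ∧ X t) = permCount 0 X := by
  simp [cycleCount_zero]

theorem cycleCount_odd_one : cycleCount 1 (fun ℓ t => Odd ℓ ∧ X t) = permCount 1 X := by
  simp [cycleCount_odd_succ, cycleCount_even_zero]

theorem cycleCount_odd_add_two (n : ℕ) :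
    cycleCount (n + 2) (fun ℓ t => Odd ℓ ∧ X t) =
      permCount (n + 2) X + (n + 2) * (n + 1) * cycleCount n (fun ℓ t => Odd ℓ ∧ X t) := by
  rw [cycleCount_odd_succ, cycleCount_even_succ]
  ring

theorem cycleCount_eq_one (n : ℕ) :
    cycleCount n (fun ℓ t => ℓ = 1 ∧ X t) = permCount n X := by
  cases n with
  | zero => simp [cycleCount_zero]
  | succ n =>
    have : cycleCount n (fun ℓ t => ℓ = 0 ∧ X t) = 0 := by
      simp only [cycleCount, Nat.card_eq_zero]
      left
      exact ⟨fun ⟨σ, h, _⟩ => (σ.cycleLength_pos 0).ne' (by omega)⟩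
    simp [cycleCount_succ, this]

theorem cycleCount_eq_two_succ (n : ℕ) :
    cycleCount (n + 1) (fun ℓ t => ℓ = 2 ∧ X t) = (n + 1) * permCount n X := by
  simp [cycleCount_succ, permCount_false, cycleCount_eq_one]

theorem cycleCount_eq_two_zero : cycleCount 0 (fun ℓ t => ℓ = 2 ∧ X t) = 0 := by
  simp [cycleCount_zero, permCount_false]

end Parity

theorem permCount_succ_filter_even (n : ℕ) (P : Multiset ℕ → Prop) :
    permCount (n + 1) (fun t => P (t.filter Even)) =
      cycleCount n (fun ℓ t => P ((if Even ℓ then {ℓ} else 0) + t.filter Even)) :=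
  Nat.card_congr <| Equiv.subtypeEquivRight fun σ => by dsimp only; rw [filter_even_cycleType σ 0]

noncomputable def allOddCount (n : ℕ) : ℕ := permCount n (fun t => t.filter Even = 0)

noncomputable def singleTwoCycleCount (n : ℕ) : ℕ := permCount n (fun t => t.filter Even = {2})

theorem allOddCount_succ (n : ℕ) :
    allOddCount (n + 1) = cycleCount n (fun ℓ t => Odd ℓ ∧ t.filter Even = 0) := by
  rw [allOddCount, permCount_succ_filter_even n (· = 0)]
  congr! 3 with ℓ t
  split_ifs with h
  · simp only [Multiset.singleton_add, Multiset.cons_ne_zero, Nat.not_odd_iff_even.2 h, false_and]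
  · simp only [zero_add, Nat.not_even_iff_odd.1 h, true_and]

theorem singleTwoCycleCount_succ (n : ℕ) :
    singleTwoCycleCount (n + 1) = cycleCount n (fun ℓ t => Odd ℓ ∧ t.filter Even = {2}) +
      cycleCount n (fun ℓ t => ℓ = 2 ∧ t.filter Even = 0) := by
  rw [singleTwoCycleCount, permCount_succ_filter_even n (· = {2}), ← cycleCount_or]
  · congr! 3 with ℓ t
    split_ifs with h
    · rw [Multiset.singleton_add, eq_comm, Multiset.singleton_eq_cons_iff, eq_comm (a := 2)]
      simp only [Nat.not_odd_iff_even.2 h, false_and, false_or]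
    · have h2 : ℓ ≠ 2 := by rintro rfl; exact h even_two
      simp only [zero_add, Nat.not_even_iff_odd.1 h, true_and, h2, false_and, or_false]
  · rintro ℓ t ⟨⟨h, -⟩, rfl, -⟩
    exact Nat.not_odd_iff_even.2 even_two h

theorem allOddCount_zero : allOddCount 0 = 1 := by
  rw [allOddCount, permCount, Nat.card_eq_one_iff_unique]
  exact ⟨⟨fun _ _ => Subtype.ext (Subsingleton.elim _ _)⟩, ⟨⟨1, by simp⟩⟩⟩

theorem allOddCount_one : allOddCount 1 = allOddCount 0 := by
  rw [allOddCount_succ, cycleCount_odd_zero]; rfl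

theorem allOddCount_add_two (n : ℕ) :
    allOddCount (n + 2) = allOddCount (n + 1) + (n + 1) * n * allOddCount n := by
  rw [allOddCount_succ, cycleCount_odd_succ, ← allOddCount, mul_assoc]
  congr 2
  cases n with
  | zero => simp [cycleCount_even_zero]
  | succ n => rw [cycleCount_even_succ, ← allOddCount_succ]

theorem allOddCount_succ_eq (n : ℕ) :
    allOddCount (n + 1) = (if Even n then n + 1 else n) * allOddCount n := by
  induction n with
  | zero => simp [allOddCount_one]
  | succ n ih =>
    rw [allOddCount_add_two]
    by_cases h : Even n
    · simp only [h, if_true] at ih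
      simp only [Nat.even_add_one, h, not_true, if_false]
      linear_combination n * ih.symm
    · simp only [h, if_false] at ih
      simp only [Nat.even_add_one, h, not_false_eq_true, if_true]
      linear_combination (n + 1) * ih.symm

theorem allOddCount_two_mul (m : ℕ) : allOddCount (2 * m) = (2 * m - 1)‼ ^ 2 := by
  induction m with
  | zero => simp [allOddCount_zero]
  | succ m ih =>
    have h1 := allOddCount_succ_eq (2 * m)
    have h2 := allOddCount_succ_eq (2 * m + 1)
    simp only [even_two_mul, if_true, Nat.even_add_one, not_true, if_false] at h1 h2
    rw [show 2 * (m + 1) = 2 * m + 1 + 1 by ring, h2, h1, ih,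
      show 2 * m + 1 + 1 - 1 = 2 * m + 1 by omega, Nat.doubleFactorial_add_one]
    ring

theorem singleTwoCycleCount_zero : singleTwoCycleCount 0 = 0 := by
  rw [singleTwoCycleCount, permCount, Nat.card_eq_zero]
  left
  exact ⟨fun ⟨σ, h⟩ => by simp [Subsingleton.elim σ 1] at h⟩

theorem cycleCount_odd_single_zero :
    cycleCount 0 (fun ℓ t => Odd ℓ ∧ t.filter Even = {2}) = 0 := by
  rw [cycleCount_odd_zero]; exact singleTwoCycleCount_zero

theorem singleTwoCycleCount_one : singleTwoCycleCount 1 = 0 := by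
  rw [singleTwoCycleCount_succ, cycleCount_odd_single_zero, cycleCount_eq_two_zero]

theorem singleTwoCycleCount_add_two (n : ℕ) :
    singleTwoCycleCount (n + 2) =
      cycleCount (n + 1) (fun ℓ t => Odd ℓ ∧ t.filter Even = {2}) +
        (n + 1) * allOddCount n := by
  rw [singleTwoCycleCount_succ, cycleCount_eq_two_succ]; rfl

theorem two_mul_cycleCount_odd_single (n : ℕ) :
    2 * cycleCount (n + 1) (fun ℓ t => Odd ℓ ∧ t.filter Even = {2}) =
      (n + 1) * n * allOddCount n := by
  induction n using Nat.twoStepInduction with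
  | zero => rw [cycleCount_odd_one, ← singleTwoCycleCount, singleTwoCycleCount_one]; simp
  | one =>
    rw [cycleCount_odd_add_two, cycleCount_odd_single_zero, ← singleTwoCycleCount,
      singleTwoCycleCount_add_two, cycleCount_odd_one, ← singleTwoCycleCount,
      singleTwoCycleCount_one, allOddCount_one]
    ring
  | more n ih₁ ih₂ =>
    rw [cycleCount_odd_add_two, ← singleTwoCycleCount, singleTwoCycleCount_add_two,
      allOddCount_add_two]
    linear_combination ih₂ + (n + 3) * (n + 2) * ih₁

theorem two_mul_singleTwoCycleCount (n : ℕ) :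
    2 * singleTwoCycleCount (n + 2) = (n + 2) * (n + 1) * allOddCount n := by
  rw [singleTwoCycleCount_add_two, mul_add, two_mul_cycleCount_odd_single]
  ring

theorem singleTwoCycleCount_div_factorial (n : ℕ) :
    (singleTwoCycleCount (n + 2) : ℝ) / (n + 2)! = allOddCount n / n ! / 2 := by
  have h : (2 * singleTwoCycleCount (n + 2) : ℝ) = (n + 2) * (n + 1) * allOddCount n := by
    exact_mod_cast two_mul_singleTwoCycleCount n
  rw [div_div, div_eq_div_iff (by positivity) (by positivity), Nat.factorial_succ,
    Nat.factorial_succ]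
  push_cast
  linear_combination (n ! : ℝ) * h

theorem allOddCount_div_factorial {n j : ℕ} (hn : n = 2 * j ∨ n = 2 * j + 1) :
    (allOddCount n : ℝ) / n ! =
      ((2 * j - 1)‼ : ℝ) ^ 2 / (2 * j)! := by
  rcases hn with rfl | rfl
  · rw [allOddCount_two_mul]; push_cast; rfl
  · rw [allOddCount_succ_eq, if_pos (even_two_mul j), Nat.factorial_succ, allOddCount_two_mul]
    push_cast
    rw [mul_div_mul_left _ _ (by positivity)]

theorem sq_doubleFactorial_two_mul_le (j : ℕ) :
    (2 * j)‼ ^ 2 ≤ (4 * j + 1) * (2 * j - 1)‼ ^ 2 := by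
  induction j with
  | zero => simp
  | succ j ih =>
    rw [show 2 * (j + 1) = 2 * j + 2 by ring, Nat.doubleFactorial_add_two,
      show 2 * j + 2 - 1 = 2 * j + 1 by omega, Nat.doubleFactorial_add_one]
    calc ((2 * j + 2) * (2 * j)‼) ^ 2
        ≤ (2 * j + 2) ^ 2 * ((4 * j + 1) * (2 * j - 1)‼ ^ 2) := by
          rw [mul_pow]; exact Nat.mul_le_mul_left _ ih
      _ ≤ (4 * (j + 1) + 1) * ((2 * j + 1) * (2 * j - 1)‼) ^ 2 := by
          rw [mul_pow, ← mul_assoc, ← mul_assoc]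
          exact Nat.mul_le_mul_right _ (by nlinarith)

theorem factorial_two_mul_eq_doubleFactorial_mul (j : ℕ) :
    (2 * j)! = (2 * j)‼ * (2 * j - 1)‼ := by
  cases j with
  | zero => rfl
  | succ j =>
    rw [show 2 * (j + 1) = 2 * j + 1 + 1 by ring, Nat.factorial_eq_mul_doubleFactorial]
    rfl

theorem one_div_four_sqrt_lt {d j : ℕ} (hj : j < d) :
    1 / (4 * √d) < ((2 * j - 1)‼ : ℝ) ^ 2 / (2 * (2 * j)!) := by
  set X := (2 * j - 1)‼
  set Y := (2 * j)‼
  have hX : (0 : ℝ) < X := by exact_mod_cast Nat.doubleFactorial_pos _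
  have hY : (0 : ℝ) < Y := by exact_mod_cast Nat.doubleFactorial_pos _
  have hnat : Y ^ 2 < 4 * d * X ^ 2 :=
    (sq_doubleFactorial_two_mul_le j).trans_lt
      (Nat.mul_lt_mul_of_pos_right (by omega) (pow_pos (Nat.doubleFactorial_pos _) 2))
  have hsqrt : (Y : ℝ) < √d * (2 * X) := by
    rw [← div_lt_iff₀ (by positivity), Real.lt_sqrt (by positivity), div_pow,
      div_lt_iff₀ (by positivity)]
    exact_mod_cast (by linarith [hnat] : Y ^ 2 < d * (2 * X) ^ 2)
  have hd : (0 : ℝ) < √d := Real.sqrt_pos.2 (by exact_mod_cast (by omega : 0 < d))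
  rw [factorial_two_mul_eq_doubleFactorial_mul, div_lt_div_iff₀ (by positivity) (by positivity)]
  push_cast
  nlinarith [mul_lt_mul_of_pos_left hsqrt (by positivity : (0 : ℝ) < 2 * X)]

/-- Let d > 2 and let e = d̃ be the largest even integer with e ≤ d.  The proportion
in S_d of permutations having exactly one 2-cycle and all other cycles of odd length
equals ((e-3)!!)² / (2·(e-2)!), and this quantity is > 1/(4√d). -/
theorem stmt_6 (d e : ℕ) (hd : 2 < d) (he : Even e) (hle : e ≤ d) (hmax : d ≤ e + 1) :
    (({σ : Equiv.Perm (Fin d) | σ.cycleType.filter Even = {2}}.ncard : ℝ)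
        / d.factorial
      = (Nat.doubleFactorial (e - 3) : ℝ) ^ 2 / (2 * (e - 2).factorial)) ∧
    ((Nat.doubleFactorial (e - 3) : ℝ) ^ 2 / (2 * (e - 2).factorial)
      > 1 / (4 * Real.sqrt d)) := by
  obtain ⟨n, rfl⟩ : ∃ n, d = n + 2 := ⟨d - 2, by omega⟩
  obtain ⟨j, rfl⟩ : ∃ j, e = 2 * j + 2 := by
    obtain ⟨k, rfl⟩ := he; exact ⟨k - 1, by omega⟩
  rw [show 2 * j + 2 - 3 = 2 * j - 1 by omega, show 2 * j + 2 - 2 = 2 * j by omega]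
  refine ⟨?_, one_div_four_sqrt_lt (by omega)⟩
  have hcard : {σ : Perm (Fin (n + 2)) | σ.cycleType.filter Even = {2}}.ncard =
      singleTwoCycleCount (n + 2) := by
    rw [← Nat.card_coe_set_eq]; rfl
  rw [hcard, singleTwoCycleCount_div_factorial,
    allOddCount_div_factorial (by omega : n = 2 * j ∨ n = 2 * j + 1), div_div,
    mul_comm (_ : ℝ) 2]
end

section
/- Let G be a transitive subgroup of S_d that contains a transposition and contains a p-cycle for some prime p > d/2. Then G = S_d. -/
/-- A transitive subgroup of S_d containing a transposition and a p-cycle for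
some prime p > d/2 is all of S_d. -/
theorem stmt_7 (d p : ℕ) (hp : p.Prime) (hpd : d < 2 * p)
    (G : Subgroup (Equiv.Perm (Fin d)))
    (htrans : ∀ i j : Fin d, ∃ σ ∈ G, σ i = j)
    (hswap : ∃ σ ∈ G, σ.IsSwap)
    (hcycle : ∃ σ ∈ G, σ.IsCycle ∧ σ.support.card = p) :
    G = ⊤ := by
  classical
  obtain ⟨τ, hτG, a, b, hab, rfl⟩ := hswap
  obtain ⟨σ, hσG, hσc, hσp⟩ := hcycle
  -- the relation "swap x y ∈ G"
  set R : Fin d → Fin d → Prop := fun x y => Equiv.swap x y ∈ G with hRdef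
  have hrefl : ∀ x, R x x := by
    intro x
    show Equiv.swap x x ∈ G
    rw [Equiv.swap_self]
    exact G.one_mem
  have hsymm : ∀ {x y}, R x y → R y x := by
    intro x y h
    show Equiv.swap y x ∈ G
    rwa [Equiv.swap_comm]
  have htrans' : ∀ {x y z}, R x y → R y z → R x z := by
    intro x y z hxy hyz
    exact SubmonoidClass.swap_mem_trans G hxy hyz
  have hconj : ∀ g ∈ G, ∀ x y, R x y → R (g x) (g y) := by
    intro g hg x y h
    show Equiv.swap (g x) (g y) ∈ G
    rw [Equiv.swap_apply_apply]
    exact G.mul_mem (G.mul_mem hg h) (G.inv_mem hg)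
  -- the setoid and its quotient
  let s : Setoid (Fin d) := ⟨R, ⟨fun x => hrefl x, fun h => hsymm h, fun h1 h2 => htrans' h1 h2⟩⟩
  -- every class has at least two elements
  have hbig : ∀ x : Fin d, ∃ y, y ≠ x ∧ R x y := by
    intro x
    obtain ⟨g, hg, hga⟩ := htrans a x
    refine ⟨g b, ?_, ?_⟩
    · rw [← hga]
      intro h
      exact hab (g.injective h).symm
    · rw [← hga]
      exact hconj g hg a b hτG
  -- the quotient is small
  have hk : 2 * Fintype.card (Quotient s) ≤ d := by
    have hcard : (Finset.univ : Finset (Fin d)).card =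
        ∑ q ∈ (Finset.univ : Finset (Quotient s)),
          (Finset.univ.filter (fun x : Fin d => Quotient.mk s x = q)).card :=
      Finset.card_eq_sum_card_fiberwise (fun x _ => Finset.mem_univ _)
    have hterm : ∀ q ∈ (Finset.univ : Finset (Quotient s)),
        2 ≤ (Finset.univ.filter (fun x : Fin d => Quotient.mk s x = q)).card := by
      intro q _
      obtain ⟨x, rfl⟩ := Quotient.exists_rep q
      obtain ⟨y, hyx, hxy⟩ := hbig x
      apply Finset.one_lt_card.2
      refine ⟨y, ?_, x, ?_, hyx⟩
      · simp only [Finset.mem_filter, Finset.mem_univ, true_and]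
        exact Quotient.sound (hsymm hxy)
      · simp only [Finset.mem_filter, Finset.mem_univ, true_and]
    calc 2 * Fintype.card (Quotient s)
        = ∑ _q ∈ (Finset.univ : Finset (Quotient s)), 2 := by
          rw [Finset.sum_const, Finset.card_univ, smul_eq_mul, mul_comm]
      _ ≤ ∑ q ∈ (Finset.univ : Finset (Quotient s)),
          (Finset.univ.filter (fun x : Fin d => Quotient.mk s x = q)).card :=
          Finset.sum_le_sum hterm
      _ = d := by rw [← hcard, Finset.card_univ, Fintype.card_fin]
  have hklt : Fintype.card (Quotient s) < p := by omega
  -- the induced permutation on the quotient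
  have hiff : ∀ x y : Fin d, R x y ↔ R (σ x) (σ y) := by
    intro x y
    refine ⟨hconj σ hσG x y, fun h => ?_⟩
    have := hconj σ⁻¹ (G.inv_mem hσG) _ _ h
    simpa using this
  let σbar : Equiv.Perm (Quotient s) := Quotient.congr σ hiff
  have hbar_mk : ∀ x : Fin d, σbar (Quotient.mk s x) = Quotient.mk s (σ x) := fun x => rfl
  have hσord : σ ^ p = 1 := by
    rw [← hσp, ← hσc.orderOf]
    exact pow_orderOf_eq_one σ
  have hbarpow : ∀ (n : ℕ) (x : Fin d),
      (σbar ^ n) (Quotient.mk s x) = Quotient.mk s ((σ ^ n) x) := by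
    intro n
    induction n with
    | zero => intro x; simp
    | succ n ih =>
      intro x
      rw [pow_succ', pow_succ']
      simp only [Equiv.Perm.mul_apply]
      rw [ih, hbar_mk]
  have hbarp : σbar ^ p = 1 := by
    ext q
    obtain ⟨x, rfl⟩ := Quotient.exists_rep q
    rw [hbarpow, hσord]
    simp
  -- σbar is trivial
  have hbar1 : σbar = 1 := by
    have hdvd : orderOf σbar ∣ p := orderOf_dvd_of_pow_eq_one hbarp
    rcases (Nat.Prime.eq_one_or_self_of_dvd hp _ hdvd) with h1 | hpp
    · exact orderOf_eq_one_iff.mp h1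
    · exfalso
      have hdvd2 : orderOf σbar ∣ Fintype.card (Equiv.Perm (Quotient s)) :=
        orderOf_dvd_card
      rw [Fintype.card_perm, hpp] at hdvd2
      have := (Nat.Prime.dvd_factorial hp).mp hdvd2
      omega
  -- each point is related to its σ-image, hence to all σ-iterates
  have hfix : ∀ x : Fin d, R x (σ x) := by
    intro x
    have : Quotient.mk s (σ x) = Quotient.mk s x := by
      rw [← hbar_mk, hbar1]; rfl
    exact hsymm (Quotient.exact this)
  have hiter : ∀ (n : ℕ) (x : Fin d), R x ((σ ^ n) x) := by
    intro n
    induction n with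
    | zero => intro x; simpa using hrefl x
    | succ n ih =>
      intro x
      rw [pow_succ']
      simp only [Equiv.Perm.mul_apply]
      exact htrans' (ih x) (hfix ((σ ^ n) x))
  -- the class of a point of the support contains the support
  have hsupp : ∀ x ∈ σ.support, ∀ y ∈ σ.support, R x y := by
    intro x hx y hy
    obtain ⟨n, hn⟩ := hσc.exists_pow_eq (Equiv.Perm.mem_support.mp hx)
      (Equiv.Perm.mem_support.mp hy)
    rw [← hn]
    exact hiter n x
  -- classes as finsets
  have hclscard : ∀ z : Fin d, p ≤ (Finset.univ.filter (fun y => R z y)).card := by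
    have hpos : 0 < p := hp.pos
    have hne : σ.support.Nonempty := Finset.card_pos.mp (by rw [hσp]; exact hpos)
    obtain ⟨x, hx⟩ := hne
    have hx_cls : p ≤ (Finset.univ.filter (fun y => R x y)).card := by
      rw [← hσp]
      apply Finset.card_le_card
      intro y hy
      simp only [Finset.mem_filter, Finset.mem_univ, true_and]
      exact hsupp x hx y hy
    intro z
    obtain ⟨g, hg, hgx⟩ := htrans x z
    calc p ≤ (Finset.univ.filter (fun y => R x y)).card := hx_cls
      _ = ((Finset.univ.filter (fun y => R x y)).image g).card :=
          (Finset.card_image_of_injective _ g.injective).symm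
      _ ≤ (Finset.univ.filter (fun y => R z y)).card := by
          apply Finset.card_le_card
          intro w hw
          simp only [Finset.mem_image, Finset.mem_filter, Finset.mem_univ, true_and] at hw ⊢
          obtain ⟨y, hy, rfl⟩ := hw
          have := hconj g hg x y hy
          rwa [hgx] at this
  -- all points are related
  have hall : ∀ u v : Fin d, R u v := by
    intro u v
    by_contra h
    have hdisj : Disjoint (Finset.univ.filter (fun y => R u y))
        (Finset.univ.filter (fun y => R v y)) := by
      rw [Finset.disjoint_left]
      intro w hw hw'
      simp only [Finset.mem_filter, Finset.mem_univ, true_and] at hw hw'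
      exact h (htrans' hw (hsymm hw'))
    have hle : (Finset.univ.filter (fun y => R u y)).card +
        (Finset.univ.filter (fun y => R v y)).card ≤ d := by
      rw [← Finset.card_union_of_disjoint hdisj]
      calc ((Finset.univ.filter (fun y => R u y)) ∪
          (Finset.univ.filter (fun y => R v y))).card
          ≤ (Finset.univ : Finset (Fin d)).card := Finset.card_le_card (Finset.subset_univ _)
        _ = d := by rw [Finset.card_univ, Fintype.card_fin]
    have h1 := hclscard u
    have h2 := hclscard v
    omega
  -- conclude
  rw [eq_top_iff, ← Equiv.Perm.closure_isSwap, Subgroup.closure_le]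
  rintro f ⟨x, y, hxy, rfl⟩
  exact hall x y
end

section
/- For all positive integers n, √(2π) · n^{n+1/2} · e^{−n + 1/(12n+1)} < n! < √(2π) · n^{n+1/2} · e^{−n + 1/(12n)}. -/
/-!
With `d n = log (n! / (√(2n) (n/e)^n))`, Mathlib's series expansion gives
`d n - d (n+1) = ∑_{k ≥ 1} t^(2k) / (2k+1)` with `t = 1/(2n+1)`. Bounding every coefficient
by `1/3` sums a geometric series to `1/(12n) - 1/(12(n+1))`, while the first term alone already
exceeds `1/(12n+1) - 1/(12(n+1)+1)`. Hence `d n - 1/(12n)` increases strictly and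
`d n - 1/(12n+1)` decreases strictly; both tend to `log √π` by Stirling's formula, which traps
`d n` strictly between `log √π + 1/(12n+1)` and `log √π + 1/(12n)`.
-/

open Real Filter Topology Stirling
open scoped Nat

theorem Filter.Tendsto.lt_of_lt_succ {α : Type*} [TopologicalSpace α] [Preorder α]
    [OrderClosedTopology α] {f : ℕ → α} {L : α} (hf : ∀ n, n ≠ 0 → f n < f (n + 1))
    (hL : Tendsto f atTop (𝓝 L)) {n : ℕ} (hn : n ≠ 0) : f n < L := by
  have hmono : StrictMono (fun k => f (k + 1)) :=
    strictMono_nat_of_lt_succ fun k => hf _ k.succ_ne_zero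
  obtain ⟨m, rfl⟩ := Nat.exists_eq_succ_of_ne_zero hn
  exact (hmono m.lt_succ_self).trans_le
    (hmono.monotone.ge_of_tendsto (hL.comp (tendsto_add_atTop_nat 1)) _)

namespace Stirling

theorem log_stirlingSeq_sdiff_lt {n : ℕ} (hn : n ≠ 0) :
    log (stirlingSeq n) - log (stirlingSeq (n + 1)) < 1 / (12 * n) - 1 / (12 * (n + 1)) := by
  obtain ⟨m, rfl⟩ := Nat.exists_eq_succ_of_ne_zero hn
  have hs := log_stirlingSeq_sdiff_hasSum m
  have hx : (1 : ℝ) ≤ (m + 1 : ℕ) := by norm_cast; omega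
  generalize ((m + 1 : ℕ) : ℝ) = x at hs hx ⊢
  generalize hr : (1 / (2 * x + 1)) ^ 2 = r at hs
  have hr0 : 0 < r := hr ▸ by positivity
  have hr1 : 1 - r = 4 * x * (x + 1) / (2 * x + 1) ^ 2 := by
    rw [← hr]; field_simp; ring
  have hgeom : HasSum (fun k : ℕ => r ^ (k + 1) / 3) (r * (1 - r)⁻¹ / 3) := by
    have hr1' : r < 1 := by
      linarith [hr1 ▸ (by positivity : 0 < 4 * x * (x + 1) / (2 * x + 1) ^ 2)]
    simpa only [← pow_succ'] using
      ((hasSum_geometric_of_lt_one hr0.le hr1').mul_left r).div_const 3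
  have hval : r * (1 - r)⁻¹ / 3 = 1 / (12 * x) - 1 / (12 * (x + 1)) := by
    rw [hr1, ← hr]; field_simp; ring
  rw [← hval]
  refine hasSum_lt (i := 1) (fun k => ?_) ?_ hs hgeom
  · rw [div_eq_mul_one_div _ (3 : ℝ), mul_comm]
    gcongr
    push_cast
    linarith [k.cast_nonneg (α := ℝ)]
  · norm_num
    nlinarith [pow_pos hr0 2]

theorem log_stirlingSeq_sdiff_gt {n : ℕ} (hn : n ≠ 0) :
    1 / (12 * n + 1) - 1 / (12 * (n + 1) + 1)
      < log (stirlingSeq n) - log (stirlingSeq (n + 1)) := by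
  obtain ⟨m, rfl⟩ := Nat.exists_eq_succ_of_ne_zero hn
  refine lt_of_lt_of_le ?_ (le_hasSum (log_stirlingSeq_sdiff_hasSum m) 0 fun j _ => by positivity)
  have hx : (1 : ℝ) ≤ (m + 1 : ℕ) := by norm_cast; omega
  generalize ((m + 1 : ℕ) : ℝ) = x at hx ⊢
  norm_num
  rw [inv_sub_inv (by positivity) (by positivity), div_lt_iff₀ (by positivity)]
  field_simp
  nlinarith

theorem tendsto_log_stirlingSeq_sub_one_div (c : ℝ) :
    Tendsto (fun n : ℕ => log (stirlingSeq n) - 1 / (12 * n + c)) atTop (𝓝 (log √π)) := by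
  have h := (tendsto_stirlingSeq_sqrt_pi.log (by positivity)).sub
    ((tendsto_const_nhds (x := (1 : ℝ))).div_atTop (tendsto_atTop_add_const_right _ c
      (tendsto_natCast_atTop_atTop.const_mul_atTop (by norm_num : (0 : ℝ) < 12))))
  simpa only [sub_zero] using h

theorem log_stirlingSeq_lt {n : ℕ} (hn : n ≠ 0) :
    log (stirlingSeq n) < log √π + 1 / (12 * n) := by
  have h := Tendsto.lt_of_lt_succ (f := fun n : ℕ => log (stirlingSeq n) - 1 / (12 * n))
    (fun k hk => by push_cast; linarith [log_stirlingSeq_sdiff_lt hk])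
    (by simpa only [add_zero] using tendsto_log_stirlingSeq_sub_one_div 0) hn
  linarith

theorem lt_log_stirlingSeq {n : ℕ} (hn : n ≠ 0) :
    log √π + 1 / (12 * n + 1) < log (stirlingSeq n) := by
  have h := Tendsto.lt_of_lt_succ (f := fun n : ℕ => -(log (stirlingSeq n) - 1 / (12 * n + 1)))
    (fun k hk => by push_cast; linarith [log_stirlingSeq_sdiff_gt hk])
    (tendsto_log_stirlingSeq_sub_one_div 1).neg hn
  linarith

theorem stirlingSeq_pos {n : ℕ} (hn : n ≠ 0) : 0 < stirlingSeq n := by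
  have := Nat.pos_of_ne_zero hn
  unfold stirlingSeq
  positivity

theorem sqrt_pi_mul_exp_lt_stirlingSeq {n : ℕ} (hn : n ≠ 0) :
    √π * exp (1 / (12 * n + 1)) < stirlingSeq n := by
  rw [← exp_log (sqrt_pos.2 pi_pos), ← exp_add, ← exp_log (stirlingSeq_pos hn)]
  exact exp_lt_exp.2 (lt_log_stirlingSeq hn)

theorem stirlingSeq_lt_sqrt_pi_mul_exp {n : ℕ} (hn : n ≠ 0) :
    stirlingSeq n < √π * exp (1 / (12 * n)) := by
  rw [← exp_log (sqrt_pos.2 pi_pos), ← exp_add, ← exp_log (stirlingSeq_pos hn)]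
  exact exp_lt_exp.2 (log_stirlingSeq_lt hn)

end Stirling

theorem sqrt_two_pi_mul_rpow_mul_exp {n : ℕ} (hn : n ≠ 0) (r : ℝ) :
    √(2 * π) * (n : ℝ) ^ ((n : ℝ) + 1 / 2) * exp (-(n : ℝ) + r)
      = √π * exp r * (√(2 * n : ℝ) * (n / exp 1) ^ n) := by
  have hn' : (0 : ℝ) < n := by positivity
  rw [rpow_add hn', rpow_natCast, ← sqrt_eq_rpow, exp_add, exp_neg, div_pow, ← exp_one_pow,
    sqrt_mul (by positivity), sqrt_mul (by positivity)]
  field_simp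

/-- Robbins's explicit Stirling bounds:
√(2π)·n^{n+1/2}·e^{−n+1/(12n+1)} < n! < √(2π)·n^{n+1/2}·e^{−n+1/(12n)}. -/
theorem stmt_18 (n : ℕ) (hn : 0 < n) :
    Real.sqrt (2 * Real.pi) * (n : ℝ) ^ ((n : ℝ) + 1 / 2)
        * Real.exp (-(n : ℝ) + 1 / (12 * n + 1))
      < (n.factorial : ℝ) ∧
    (n.factorial : ℝ)
      < Real.sqrt (2 * Real.pi) * (n : ℝ) ^ ((n : ℝ) + 1 / 2)
          * Real.exp (-(n : ℝ) + 1 / (12 * n)) := by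
  have hn0 : n ≠ 0 := hn.ne'
  have hD : 0 < √(2 * n : ℝ) * (n / exp 1) ^ n := by positivity
  have hfac : (n ! : ℝ) = stirlingSeq n * (√(2 * n : ℝ) * (n / exp 1) ^ n) := by
    rw [stirlingSeq, div_mul_cancel₀ _ hD.ne']
  rw [sqrt_two_pi_mul_rpow_mul_exp hn0, sqrt_two_pi_mul_rpow_mul_exp hn0, hfac]
  exact ⟨mul_lt_mul_of_pos_right (sqrt_pi_mul_exp_lt_stirlingSeq hn0) hD,
    mul_lt_mul_of_pos_right (stirlingSeq_lt_sqrt_pi_mul_exp hn0) hD⟩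
end
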